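/- Let G be a finite directed graph with nonnegative edge weights containing a directed path P = p₀, …, p_{n-1} of total length 0, let m be an index, and let β ≥ 0 and ε ≥ 0. For pairs A = (u,v) and A' = (u',v') of indices with u' < u, say that A bad-crosses A' if u > u' > v > v' and every walk in G from p_u to p_{v'} that avoids all vertices p_k with k < v' has length greater than (1+ε)β. Let A₁ = (u₁,v₁), …, A_t = (u_t,v_t) be pairs of indices with v_i < m < u_i for every i, and suppose A_i bad-crosses A_{i+1} for every i < t. Then A_i bad-crosses A_j for all i < j. -/
import Mathlib


/-- A walk in the directed graph with edge relation `E`: a nonempty list of vertices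
starting at `u`, ending at `v`, with every consecutive pair an edge. -/
def IsWalk {V : Type*} (E : V → V → Prop) (l : List V) (u v : V) : Prop :=
  l ≠ [] ∧ l.head? = some u ∧ l.getLast? = some v ∧ l.Chain' E

/-- The length of a walk: the sum of the weights of its consecutive pairs. -/
def walkLen {V : Type*} (w : V → V → ℝ) (l : List V) : ℝ :=
  ((l.zip l.tail).map fun q => w q.1 q.2).sum

/-- The pair `A = (u,v)` bad-crosses `A' = (u',v')` (w.r.t. the path `p`, budget `β` and
approximation `ε`): `u > u' > v > v'` and every walk in `G` from `p u` to `p v'`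
avoiding all vertices `p k` with `k < v'` has length greater than `(1+ε)β`. -/
def BadCross {V : Type*} (E : V → V → Prop) (w : V → V → ℝ) (p : ℕ → V)
    (β ε : ℝ) (A A' : ℕ × ℕ) : Prop :=
  A'.1 < A.1 ∧ A.2 < A'.1 ∧ A'.2 < A.2 ∧
  ∀ l, IsWalk E l (p A.1) (p A'.2) → (∀ x ∈ l, ∀ k, k < A'.2 → x ≠ p k) →
    (1 + ε) * β < walkLen w l


lemma walkLen_cons_cons {V : Type*} (w : V → V → ℝ) (x y : V) (l : List V) :
    walkLen w (x :: y :: l) = w x y + walkLen w (y :: l) := by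
  simp [walkLen]

lemma prepend_walk {V : Type*} (E : V → V → Prop) (w : V → V → ℝ) (n : ℕ) (p : ℕ → V)
    (hch : ∀ i, i + 1 < n → E (p i) (p (i + 1)))
    (hlen0 : ∀ i, i + 1 < n → w (p i) (p (i + 1)) = 0) :
    ∀ d b x l, b + d < n → IsWalk E l (p (b + d)) x →
      ∃ l', IsWalk E l' (p b) x ∧ walkLen w l' = walkLen w l ∧
        ∀ y ∈ l', y ∈ l ∨ ∃ k, b ≤ k ∧ k < n ∧ y = p k := by
  intro d
  induction d with
  | zero => intro b x l h hwk; exact ⟨l, hwk, rfl, fun y hy => Or.inl hy⟩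
  | succ d ih =>
    intro b x l h hwk
    obtain ⟨l', hl', hlen, hmem⟩ := ih (b + 1) x l (by omega)
      (by rwa [show b + 1 + d = b + (d + 1) by omega])
    obtain ⟨hne, hhead, hlast, hchain⟩ := hl'
    obtain ⟨hd, tl, rfl⟩ := List.exists_cons_of_ne_nil hne
    have hhd : hd = p (b + 1) := by simpa using hhead
    subst hhd
    refine ⟨p b :: p (b + 1) :: tl, ⟨by simp, by simp, by simpa using hlast, ?_⟩, ?_, ?_⟩
    · exact List.IsChain.cons_cons (hch b (by omega)) hchain
    · rw [walkLen_cons_cons, hlen0 b (by omega), zero_add, hlen]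
    · intro y hy
      rcases List.mem_cons.1 hy with rfl | hy
      · exact Or.inr ⟨b, le_refl _, by omega, rfl⟩
      · rcases hmem y hy with h | ⟨k, hk1, hk2, hk3⟩
        · exact Or.inl h
        · exact Or.inr ⟨k, by omega, hk2, hk3⟩

/-- If `A₁, …, A_t` are pairs with `v_i < m < u_i` and each `A_i`
bad-crosses `A_{i+1}`, then `A_i` bad-crosses `A_j` for all `i < j`. -/
theorem stmt_13 {V : Type*} [Fintype V] (E : V → V → Prop) (w : V → V → ℝ)
    (hw : ∀ x y, 0 ≤ w x y) (n : ℕ) (hn : 0 < n) (p : ℕ → V)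
    (hinj : ∀ i j, i < n → j < n → p i = p j → i = j)
    (hch : ∀ i, i + 1 < n → E (p i) (p (i + 1)))
    (hlen0 : ∀ i, i + 1 < n → w (p i) (p (i + 1)) = 0)
    (m : ℕ) (hm : m < n) (β ε : ℝ) (hβ : 0 ≤ β) (hε : 0 ≤ ε)
    (t : ℕ) (u v : ℕ → ℕ)
    (hbounds : ∀ i, 1 ≤ i → i ≤ t → v i < m ∧ m < u i ∧ u i < n)
    (hchain : ∀ i, 1 ≤ i → i < t →
      BadCross E w p β ε (u i, v i) (u (i + 1), v (i + 1))) :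
    ∀ i j, 1 ≤ i → i < j → j ≤ t →
      BadCross E w p β ε (u i, v i) (u j, v j) := by
  intro i j
  induction j with
  | zero => omega
  | succ j ih =>
    intro hi hij hjt
    rcases Nat.lt_or_ge i j with hlt | hge
    · have hij' := ih hi hlt (by omega)
      have hjk := hchain j (by omega) (by omega)
      obtain ⟨h1, h2, h3, h4⟩ := hij'
      obtain ⟨h1', h2', h3', h4'⟩ := hjk
      simp only [Prod.fst, Prod.snd] at *
      obtain ⟨hv1, hm1, hu1⟩ := hbounds i hi (by omega)
      obtain ⟨hvj, hmj, huj⟩ := hbounds j (by omega) (by omega)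
      obtain ⟨hvj1, hmj1, huj1⟩ := hbounds (j + 1) (by omega) hjt
      refine ⟨by omega, by omega, by omega, ?_⟩
      intro l hwalk havoid
      obtain ⟨l', hl', hlen, hmem⟩ := prepend_walk E w n p hch hlen0 (u i - u j) (u j)
        (p (v (j + 1))) l (by omega) (by rwa [show u j + (u i - u j) = u i by omega])
      rw [← hlen]
      apply h4' l' hl'
      intro x hx k hk hxk
      rcases hmem x hx with hxl | ⟨k', hk1, hk2, rfl⟩
      · exact havoid x hxl k hk hxk
      · have := hinj k' k hk2 (by omega) hxk
        omega
    · have : j = i := by omega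
      subst this
      exact hchain _ (by omega) (by omega)
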